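/- Let D be a reversible Hadamard difference set with parameters (4n², 2n² - n, n² - n) in a finite group G, and suppose there exists a subgroup H ≤ G of order 2n with D ∩ H = ∅. Then the vertex set of the Cayley graph Cay(G, D) can be partitioned into 2n disjoint cocliques, each of size 2n; consequently there exists a symmetric Bush-type Hadamard matrix of order 4n². -/

import Mathlib

/-- `H` is a symmetric Bush-type Hadamard matrix of order `4n²`, with rows and
columns indexed by pairs (block index, position within block). -/
def IsSymmetricBushType (n : ℕ)
    (H : Matrix (Fin (2 * n) × Fin (2 * n)) (Fin (2 * n) × Fin (2 * n)) ℤ) : Prop :=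
  (∀ x y, H x y = 1 ∨ H x y = -1) ∧
  H.transpose = H ∧
  H * H.transpose = ((4 * n ^ 2 : ℕ) : ℤ) •
    (1 : Matrix (Fin (2 * n) × Fin (2 * n)) (Fin (2 * n) × Fin (2 * n)) ℤ) ∧
  (∀ i a b, H (i, a) (i, b) = 1) ∧
  (∀ i j, i ≠ j → ∀ a, ∑ b, H (i, a) (j, b) = 0) ∧
  (∀ i j, i ≠ j → ∀ b, ∑ a, H (i, a) (j, b) = 0)

/-!
If `D` misses `H`, the right cosets of `H` are cocliques of `Cay(G, D)`. Counting the pairs of `D`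
whose quotient lies in `H` shows that the numbers `f i = |D ∩ H gᵢ|` of the `2n - 1` nontrivial
cosets satisfy `∑ f i = (2n - 1) n` and `∑ f i ^ 2 = (2n - 1) n²`: this is the equality case of
Cauchy–Schwarz, so every nontrivial coset meets `D` in exactly `n` points. Listing `G` coset by
coset, the `±1` matrix `J - 2A` of `Cay(G, D)` is then symmetric since `D = D⁻¹`, Hadamard by
Menon's relation `4n² = 4(k - λ)`, has all-ones diagonal blocks since `D ∩ H = ∅`, and has balanced
off-diagonal blocks since every vertex has exactly `n` neighbours in each other coset.
-/

open Finset
open scoped Matrix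

theorem Finset.sum_card_filter_sq {α ι : Type*} [Fintype ι] [DecidableEq ι]
    (s : Finset α) (β : α → ι) :
    ∑ i, #{a ∈ s | β a = i} ^ 2 = #{p ∈ s ×ˢ s | β p.1 = β p.2} := by
  rw [card_eq_sum_card_fiberwise (f := fun p => β p.1) (t := univ) fun _ _ => mem_univ _]
  refine sum_congr rfl fun i _ => ?_
  rw [sq, ← card_product, filter_filter]
  congr 1
  ext ⟨a, b⟩
  simp only [mem_product, mem_filter]
  constructor
  · rintro ⟨⟨ha, rfl⟩, hb, hbi⟩
    exact ⟨⟨ha, hb⟩, hbi.symm, rfl⟩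
  · rintro ⟨⟨ha, hb⟩, hab, rfl⟩
    exact ⟨⟨ha, rfl⟩, hb, hab.symm⟩

theorem Finset.eq_of_sum_eq_of_sum_sq_eq {ι R : Type*} [CommRing R] [LinearOrder R]
    [IsStrictOrderedRing R] {s : Finset ι} {f : ι → R} {c : R}
    (h₁ : ∑ i ∈ s, f i = #s * c) (h₂ : ∑ i ∈ s, f i ^ 2 = #s * c ^ 2) :
    ∀ i ∈ s, f i = c := by
  have hvar : ∑ i ∈ s, (f i - c) ^ 2 = 0 := by
    simp only [sub_sq, sum_add_distrib, sum_sub_distrib, ← sum_mul, ← mul_sum, h₁, h₂,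
      sum_const, nsmul_eq_mul]
    ring
  intro i hi
  have := (sum_eq_zero_iff_of_nonneg fun j _ => sq_nonneg (f j - c)).1 hvar i hi
  exact sub_eq_zero.1 (pow_eq_zero_iff two_ne_zero |>.1 this)

theorem Equiv.sum_filter_fst_eq {α ι κ M : Type*} [Fintype α] [Fintype ι] [Fintype κ]
    [DecidableEq ι] [AddCommMonoid M] (σ : α ≃ ι × κ) (F : α → M) (j : ι) :
    ∑ z with (σ z).1 = j, F z = ∑ b, F (σ.symm (j, b)) := by
  rw [sum_filter, ← σ.symm.sum_comp, Fintype.sum_prod_type]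
  simp

theorem Equiv.card_filter_fst_eq {α ι κ : Type*} [Fintype α] [Fintype ι] [Fintype κ]
    [DecidableEq ι] (σ : α ≃ ι × κ) (j : ι) :
    #{z | (σ z).1 = j} = Fintype.card κ := by
  rw [card_eq_sum_ones, σ.sum_filter_fst_eq]
  simp

theorem Subgroup.exists_equiv_fin_prod_fin {G : Type*} [Group G] [Finite G] (H : Subgroup G)
    {m k : ℕ} (hm : H.index = m) (hk : Nat.card H = k) :
    ∃ σ : G ≃ Fin m × Fin k, ∀ x y, (σ x).1 = (σ y).1 ↔ x * y⁻¹ ∈ H := by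
  obtain ⟨T, hT, -⟩ := H.exists_isComplement_right 1
  let eT : T ≃ Fin m := (Finite.equivFin T).trans (finCongr (hT.card_right.trans hm))
  let eH : H ≃ Fin k := (Finite.equivFin H).trans (finCongr hk)
  refine ⟨hT.equiv.trans ((Equiv.prodComm _ _).trans (eT.prodCongr eH)), fun x y => ?_⟩
  simp only [Equiv.trans_apply, Equiv.prodComm_apply, Prod.fst_swap, Equiv.prodCongr_apply,
    Prod.map_fst, eT.apply_eq_iff_eq, hT.equiv_snd_eq_iff_rightCosetEquivalence,
    RightCosetEquivalence, rightCoset_eq_iff]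
  rw [← H.inv_mem_iff, mul_inv_rev, inv_inv]

section

variable {G : Type*} [Group G] [DecidableEq G]

def IsDifferenceSet (D : Finset G) (lam : ℕ) : Prop :=
  ∀ g : G, g ≠ 1 → #{p ∈ D ×ˢ D | p.1 ≠ p.2 ∧ p.1 * p.2⁻¹ = g} = lam

/-- The matrix `J - 2A`, where `A` is the adjacency matrix of `Cay(G, D)`. -/
def cayleySignMatrix (D : Finset G) : Matrix G G ℤ :=
  Matrix.of fun x y => if x * y⁻¹ ∈ D then -1 else 1

variable {D : Finset G} {lam : ℕ}

theorem cayleySignMatrix_transpose (hrev : ∀ d ∈ D, d⁻¹ ∈ D) :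
    (cayleySignMatrix D)ᵀ = cayleySignMatrix D := by
  ext x y
  have : y * x⁻¹ ∈ D ↔ x * y⁻¹ ∈ D :=
    ⟨fun h => by simpa using hrev _ h, fun h => by simpa using hrev _ h⟩
  simp [cayleySignMatrix, this]

theorem IsDifferenceSet.card_filter_product_mul_inv_mem (hD : IsDifferenceSet D lam)
    {S : Finset G} (hS : 1 ∈ S) :
    #{p ∈ D ×ˢ D | p.1 * p.2⁻¹ ∈ S} = #D + (#S - 1) * lam := by
  rw [card_eq_sum_card_fiberwise (f := fun p => p.1 * p.2⁻¹) (s := {p ∈ D ×ˢ D | p.1 * p.2⁻¹ ∈ S})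
      (t := S) fun p hp => (mem_filter.1 hp).2,
    ← add_sum_erase S _ hS, sum_congr rfl (g := fun _ => lam), sum_const, card_erase_of_mem hS,
    smul_eq_mul, mul_comm]
  · congr 1
    rw [filter_filter, ← diag_card D]
    congr 1
    ext p : 1
    simp only [mem_filter, mem_diag, mul_inv_eq_one]
    constructor
    · rintro ⟨hp, -, h⟩; exact ⟨(mem_product.1 hp).1, h⟩
    · rintro ⟨hp, h⟩; exact ⟨mem_product.2 ⟨hp, h ▸ hp⟩, by simpa [h] using hS, h⟩
  · intro g hg
    rw [← hD g (ne_of_mem_erase hg), filter_filter]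
    congr 1
    ext p
    simp only [mem_filter]
    constructor
    · rintro ⟨hp, -, rfl⟩; exact ⟨hp, fun h => by simp [h] at hg, rfl⟩
    · rintro ⟨hp, -, rfl⟩; exact ⟨hp, mem_of_mem_erase hg, rfl⟩

variable [Fintype G]

theorem card_filter_mul_inv_mem (x : G) : #{z | x * z⁻¹ ∈ D} = #D :=
  card_nbij' (fun z => x * z⁻¹) (fun d => d⁻¹ * x) (fun z hz => by simpa using hz)
    (fun d hd => by simpa using hd) (fun z _ => by simp) (fun d _ => by simp)

theorem IsDifferenceSet.card_filter_mul_inv_mem_and_mem (hD : IsDifferenceSet D lam)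
    {x y : G} (hxy : x ≠ y) : #{z | x * z⁻¹ ∈ D ∧ y * z⁻¹ ∈ D} = lam := by
  rw [← hD (x * y⁻¹) (mul_inv_eq_one.not.2 hxy)]
  have hsnd : ∀ p : G × G, p.1 * p.2⁻¹ = x * y⁻¹ → p.2 = y * x⁻¹ * p.1 := fun p hp => by
    rw [show p.2 = (p.1 * p.2⁻¹)⁻¹ * p.1 by group, hp]; group
  refine card_nbij' (fun z => (x * z⁻¹, y * z⁻¹)) (fun p => p.1⁻¹ * x) ?_ ?_ ?_ ?_
  · intro z hz
    simp only [coe_filter, mem_univ, true_and, Set.mem_ofPred_eq] at hz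
    simp only [coe_filter, mem_product, Set.mem_ofPred_eq]
    exact ⟨hz, fun h => hxy (mul_right_cancel h), by group⟩
  · intro p hp
    simp only [coe_filter, mem_product, Set.mem_ofPred_eq] at hp
    obtain ⟨⟨h₁, h₂⟩, -, hp⟩ := hp
    rw [hsnd p hp] at h₂
    simp only [coe_filter, mem_univ, true_and, Set.mem_ofPred_eq]
    exact ⟨by simpa using h₁, by simpa [mul_assoc] using h₂⟩
  · intro z _; simp
  · intro p hp
    simp only [coe_filter, mem_product, Set.mem_ofPred_eq] at hp
    ext <;> simp [hsnd p hp.2.2, mul_assoc]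

theorem cayleySignMatrix_mul_transpose_apply (x y : G) :
    (cayleySignMatrix D * (cayleySignMatrix D)ᵀ) x y =
      Fintype.card G - 4 * #D + 4 * #{z | x * z⁻¹ ∈ D ∧ y * z⁻¹ ∈ D} := by
  have hz : ∀ z, cayleySignMatrix D x z * cayleySignMatrix D y z =
      1 - 2 * (if x * z⁻¹ ∈ D then 1 else 0) - 2 * (if y * z⁻¹ ∈ D then 1 else 0)
        + 4 * (if x * z⁻¹ ∈ D ∧ y * z⁻¹ ∈ D then 1 else 0) := by
    intro z
    simp only [cayleySignMatrix, Matrix.of_apply]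
    split_ifs <;> simp_all
  simp only [Matrix.mul_apply, Matrix.transpose_apply, hz, sum_add_distrib, sum_sub_distrib,
    ← mul_sum, sum_boole, sum_const, card_univ, card_filter_mul_inv_mem]
  ring

theorem IsDifferenceSet.cayleySignMatrix_mul_transpose (hD : IsDifferenceSet D lam)
    (h : Fintype.card G + 4 * lam = 4 * #D) :
    cayleySignMatrix D * (cayleySignMatrix D)ᵀ = (Fintype.card G : ℤ) • 1 := by
  ext x y
  rw [cayleySignMatrix_mul_transpose_apply, Matrix.smul_apply, Matrix.one_apply]
  rcases eq_or_ne x y with rfl | hxy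
  · simp [card_filter_mul_inv_mem]
  · rw [hD.card_filter_mul_inv_mem_and_mem hxy, if_neg hxy, smul_zero]
    linarith [congrArg (Nat.cast : ℕ → ℤ) h |>.trans (Nat.cast_mul 4 #D)]

section

variable {ι κ : Type*} [DecidableEq ι] {H : Subgroup G} {σ : G ≃ ι × κ}

theorem card_filter_fst_eq_and_mul_inv_mem (hrev : ∀ d ∈ D, d⁻¹ ∈ D)
    (hσ : ∀ x y, (σ x).1 = (σ y).1 ↔ x * y⁻¹ ∈ H) (x y : G) :
    #{z | (σ z).1 = (σ y).1 ∧ x * z⁻¹ ∈ D} = #{d ∈ D | (σ d).1 = (σ (y * x⁻¹)).1} := by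
  have hblock : ∀ z, (σ (z * x⁻¹)).1 = (σ (y * x⁻¹)).1 ↔ (σ z).1 = (σ y).1 := by
    simp [hσ, mul_assoc]
  refine card_nbij' (fun z => z * x⁻¹) (fun d => d * x) ?_ ?_
    (fun z _ => by simp) (fun d _ => by simp)
  · intro z hz
    simp only [coe_filter, mem_univ, true_and, Set.mem_ofPred_eq] at hz ⊢
    exact ⟨by simpa using hrev _ hz.2, (hblock z).2 hz.1⟩
  · intro d hd
    simp only [coe_filter, mem_univ, true_and, Set.mem_ofPred_eq] at hd ⊢
    exact ⟨by simpa using (hblock (d * x)).1 (by simpa using hd.2), by simpa using hrev _ hd.1⟩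

variable [Fintype ι] [Fintype κ]

theorem sum_cayleySignMatrix_block_eq_zero (hrev : ∀ d ∈ D, d⁻¹ ∈ D)
    (hσ : ∀ x y, (σ x).1 = (σ y).1 ↔ x * y⁻¹ ∈ H)
    (hhalf : ∀ i ≠ (σ 1).1, 2 * #{d ∈ D | (σ d).1 = i} = Fintype.card κ)
    {x y : G} (hxy : (σ x).1 ≠ (σ y).1) :
    ∑ b, cayleySignMatrix D x (σ.symm ((σ y).1, b)) = 0 := by
  have hne : (σ (y * x⁻¹)).1 ≠ (σ 1).1 := by
    rwa [Ne, hσ, inv_one, mul_one, ← inv_mem_iff, mul_inv_rev, inv_inv, ← hσ]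
  have hcount := card_filter_fst_eq_and_mul_inv_mem hrev hσ x y
  have htot := card_filter_add_card_filter_not (s := {z | (σ z).1 = (σ y).1})
    (p := fun z => x * z⁻¹ ∈ D)
  rw [σ.card_filter_fst_eq, ← hhalf _ hne, filter_filter, hcount] at htot
  rw [← σ.sum_filter_fst_eq]
  simp only [cayleySignMatrix, Matrix.of_apply]
  rw [sum_ite, sum_const, sum_const, filter_filter, hcount]
  simp only [smul_neg, nsmul_eq_mul, mul_one]
  omega

theorem IsDifferenceSet.sum_card_filter_fst_eq_sq (hD : IsDifferenceSet D lam)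
    (hσ : ∀ x y, (σ x).1 = (σ y).1 ↔ x * y⁻¹ ∈ H) :
    ∑ i, #{d ∈ D | (σ d).1 = i} ^ 2 = #D + (Fintype.card κ - 1) * lam := by
  rw [sum_card_filter_sq, ← σ.card_filter_fst_eq (σ 1).1,
    ← hD.card_filter_product_mul_inv_mem (S := {z | (σ z).1 = (σ 1).1}) (by simp)]
  refine congrArg card (filter_congr fun p _ => ?_)
  simp [hσ]

theorem IsDifferenceSet.card_filter_fst_eq_of_hadamard {n : ℕ}
    (hD : IsDifferenceSet D (n ^ 2 - n)) (hk : #D = 2 * n ^ 2 - n)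
    (hι : Fintype.card ι = 2 * n) (hκ : Fintype.card κ = 2 * n)
    (hσ : ∀ x y, (σ x).1 = (σ y).1 ↔ x * y⁻¹ ∈ H) (hdisj : ∀ h ∈ H, h ∉ D)
    {i : ι} (hi : i ≠ (σ 1).1) : #{d ∈ D | (σ d).1 = i} = n := by
  have hn : 1 ≤ n := by have := Fintype.card_pos_iff.2 ⟨i⟩; omega
  have hn₁ : n ≤ n ^ 2 := Nat.le_self_pow two_ne_zero n
  have hn₂ : n ≤ 2 * n ^ 2 := by omega
  have h₀ : #{d ∈ D | (σ d).1 = (σ 1).1} = 0 := by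
    simp only [card_eq_zero, filter_eq_empty_iff]
    exact fun d hd h => hdisj d (by simpa using (hσ d 1).1 h) hd
  have hsum : ∑ i, #{d ∈ D | (σ d).1 = i} = #D :=
    (card_eq_sum_card_fiberwise fun _ _ => mem_univ _).symm
  have hs : (#(univ.erase (σ 1).1) : ℤ) = 2 * n - 1 := by
    rw [card_erase_of_mem (mem_univ _), card_univ, hι, Nat.cast_sub (by omega)]
    push_cast; ring
  refine Int.ofNat_inj.1 <| eq_of_sum_eq_of_sum_sq_eq (c := (n : ℤ))
    (f := fun i => (#{d ∈ D | (σ d).1 = i} : ℤ)) ?_ ?_ i (mem_erase.2 ⟨hi, mem_univ i⟩)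
  · rw [sum_erase _ (by simp [h₀]), ← Nat.cast_sum, hsum, hk, hs, Nat.cast_sub hn₂]
    push_cast; ring
  · rw [sum_erase _ (by simp [h₀]), hs]
    simp only [← Nat.cast_pow, ← Nat.cast_sum, hD.sum_card_filter_fst_eq_sq hσ, hk, hκ]
    push_cast [Nat.cast_sub hn₂, Nat.cast_sub hn₁, Nat.cast_sub (by omega : 1 ≤ 2 * n)]
    ring

end

theorem isSymmetricBushType_cayleySignMatrix_submatrix {H : Subgroup G} {n : ℕ}
    (hv : Fintype.card G = 4 * n ^ 2) (hk : #D = 2 * n ^ 2 - n)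
    (hD : IsDifferenceSet D (n ^ 2 - n)) (hrev : ∀ d ∈ D, d⁻¹ ∈ D) (hdisj : ∀ h ∈ H, h ∉ D)
    {σ : G ≃ Fin (2 * n) × Fin (2 * n)} (hσ : ∀ x y, (σ x).1 = (σ y).1 ↔ x * y⁻¹ ∈ H) :
    IsSymmetricBushType n ((cayleySignMatrix D).submatrix σ.symm σ.symm) := by
  set M := (cayleySignMatrix D).submatrix σ.symm σ.symm
  have hsymm : Mᵀ = M := by rw [Matrix.transpose_submatrix, cayleySignMatrix_transpose hrev]
  have hhalf : ∀ i ≠ (σ 1).1, 2 * #{d ∈ D | (σ d).1 = i} = Fintype.card (Fin (2 * n)) :=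
    fun i hi => by
      rw [hD.card_filter_fst_eq_of_hadamard hk (Fintype.card_fin _) (Fintype.card_fin _) hσ
        hdisj hi, Fintype.card_fin]
  have hrow : ∀ i j, i ≠ j → ∀ a, ∑ b, M (i, a) (j, b) = 0 := fun i j hij a => by
    simpa [M] using sum_cayleySignMatrix_block_eq_zero hrev hσ hhalf (x := σ.symm (i, a))
      (y := σ.symm (j, a)) (by simpa using hij)
  have hparams : Fintype.card G + 4 * (n ^ 2 - n) = 4 * #D := by
    have := Nat.le_self_pow two_ne_zero n
    rw [hv, hk]
    omega
  refine ⟨fun x y => ?_, hsymm, ?_, fun i a b => ?_, hrow, fun i j hij b => ?_⟩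
  · simp only [M, Matrix.submatrix_apply, cayleySignMatrix, Matrix.of_apply]
    split_ifs <;> simp
  · rw [Matrix.transpose_submatrix, Matrix.submatrix_mul_equiv,
      hD.cayleySignMatrix_mul_transpose hparams, hv]
    ext p q
    simp only [Matrix.submatrix_apply, Matrix.smul_apply, Matrix.one_apply,
      σ.symm.injective.eq_iff]
  · exact if_neg (hdisj _ ((hσ _ _).1 (by simp)))
  · rw [← hrow j i hij.symm b]
    exact sum_congr rfl fun a _ => congrFun (congrFun hsymm.symm _) _

end

theorem reversible_hds_with_disjoint_subgroup {G : Type*} [Group G] [Fintype G]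
    [DecidableEq G] (n : ℕ) (D : Finset G)
    (hv : Fintype.card G = 4 * n ^ 2) (hk : D.card = 2 * n ^ 2 - n)
    (hdiff : ∀ g : G, g ≠ 1 →
      ((D ×ˢ D).filter fun p => p.1 ≠ p.2 ∧ p.1 * p.2⁻¹ = g).card = n ^ 2 - n)
    (hrev : ∀ d : G, d ∈ D → d⁻¹ ∈ D)
    (H : Subgroup G) (hH : Nat.card H = 2 * n) (hdisj : ∀ h ∈ H, h ∉ D) :
    (∃ C : Fin (2 * n) → Finset G,
      (∀ x : G, ∃! i, x ∈ C i) ∧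
      (∀ i, (C i).card = 2 * n) ∧
      (∀ i, ∀ x ∈ C i, ∀ y ∈ C i, x * y⁻¹ ∉ D)) ∧
    ∃ M : Matrix (Fin (2 * n) × Fin (2 * n)) (Fin (2 * n) × Fin (2 * n)) ℤ,
      IsSymmetricBushType n M := by
  have hn : 0 < n := by
    have := Fintype.card_pos (α := G)
    rw [hv] at this
    exact Nat.pos_of_ne_zero (by rintro rfl; simp at this)
  have hindex : H.index = 2 * n := by
    have := H.index_mul_card
    rw [hH, Nat.card_eq_fintype_card, hv] at this
    exact Nat.eq_of_mul_eq_mul_right (by omega : 0 < 2 * n) (by rw [this]; ring)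
  obtain ⟨σ, hσ⟩ := H.exists_equiv_fin_prod_fin hindex hH
  refine ⟨⟨fun i => {x | (σ x).1 = i},
    fun x => ⟨(σ x).1, by simp, fun i hi => (mem_filter.1 hi).2.symm⟩,
    fun i => by simpa using σ.card_filter_fst_eq i, fun i x hx y hy => hdisj _ ((hσ x y).1 ?_)⟩,
    _, isSymmetricBushType_cayleySignMatrix_submatrix hv hk hdiff hrev hdisj hσ⟩
  exact (mem_filter.1 hx).2.trans (mem_filter.1 hy).2.symm
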